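/- arXiv:1808.00906 — 6 statements merged into one kernel-verified Lean document; each statement's English description precedes it below -/
import Mathlib

section
/- Let X be an ordered set with distinguished element 0 and preadmissible multiplication, and let a ≤ x ≤ b in X. If l is a lower bound of {a·y, b·y} and u is an upper bound of {a·y, b·y}, then l ≤ x·y ≤ u. -/
theorem stmt4 {X : Type*} (lt : X → X → Prop) (mul : X → X → X) (zero : X)
    (asym : ∀ x y : X, lt x y → ¬ lt y x)
    (cotrans : ∀ x y z : X, lt x y → lt x z ∨ lt z y)
    (negantisym : ∀ x y : X, ¬ lt x y → ¬ lt y x → x = y)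
    (hz : ∀ x : X, mul zero x = zero ∧ mul x zero = zero)
    (hpos : ∀ x y z : X, lt x y → lt zero z → lt (mul x z) (mul y z))
    (hneg : ∀ x y z : X, lt x y → lt z zero → lt (mul y z) (mul x z))
    (a b x y l u : X)
    (hax : ¬ lt x a) (hxb : ¬ lt b x)
    (hl : ¬ lt (mul a y) l ∧ ¬ lt (mul b y) l)
    (hu : ¬ lt u (mul a y) ∧ ¬ lt u (mul b y)) :
    ¬ lt (mul x y) l ∧ ¬ lt u (mul x y) := by
  have irrefl : ∀ z : X, ¬ lt z z := fun z h => asym z z h h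
  have tri : ∀ p q : X, lt p q ∨ lt q p ∨ p = q := by
    intro p q
    by_cases h1 : lt p q
    · exact Or.inl h1
    by_cases h2 : lt q p
    · exact Or.inr (Or.inl h2)
    · exact Or.inr (Or.inr (negantisym p q h1 h2))
  rcases tri zero y with hy | hy | hy
  · -- 0 < y
    constructor
    · intro h
      rcases cotrans _ _ (mul a y) h with h' | h'
      · rcases tri a x with hax' | hax' | hax'
        · exact asym _ _ h' (hpos a x y hax' hy)
        · exact hax hax'
        · exact irrefl _ (hax' ▸ h')
      · exact hl.1 h'
    · intro h
      rcases cotrans _ _ (mul b y) h with h' | h'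
      · exact hu.2 h'
      · rcases tri x b with hxb' | hxb' | hxb'
        · exact asym _ _ h' (hpos x b y hxb' hy)
        · exact hxb hxb'
        · exact irrefl _ (hxb' ▸ h')
  · -- y < 0
    constructor
    · intro h
      rcases cotrans _ _ (mul b y) h with h' | h'
      · rcases tri x b with hxb' | hxb' | hxb'
        · exact asym _ _ h' (hneg x b y hxb' hy)
        · exact hxb hxb'
        · exact irrefl _ (hxb' ▸ h')
      · exact hl.2 h'
    · intro h
      rcases cotrans _ _ (mul a y) h with h' | h'
      · exact hu.1 h'
      · rcases tri a x with hax' | hax' | hax'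
        · exact asym _ _ h' (hneg a x y hax' hy)
        · exact hax hax'
        · exact irrefl _ (hax' ▸ h')
  · -- y = 0
    subst hy
    rw [(hz x).2]
    rw [(hz a).2] at hl hu
    exact ⟨hl.1, hu.1⟩
end

section
/- Let X be an ordered set containing a subset M that is almost dense and bicofinal in X. If x, y ∈ X satisfy: for all a, b ∈ M, (a ≤ x ∧ x ≤ b) if and only if (a ≤ y ∧ y ≤ b), then x = y. -/
theorem stmt6 {X : Type*} (lt : X → X → Prop) (M : Set X)
    (asym : ∀ x y : X, lt x y → ¬ lt y x)
    (cotrans : ∀ x y z : X, lt x y → lt x z ∨ lt z y)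
    (negantisym : ∀ x y : X, ¬ lt x y → ¬ lt y x → x = y)
    (hdense : ∀ x y : X, lt x y → ∃ s ∈ M, ∃ s' ∈ M,
      ¬ lt s x ∧ lt s s' ∧ ¬ lt y s')
    (hbicof : ∀ x : X, ∃ s ∈ M, ∃ s' ∈ M, ¬ lt x s ∧ ¬ lt s' x)
    (x y : X)
    (h : ∀ a ∈ M, ∀ b ∈ M, (¬ lt x a ∧ ¬ lt b x) ↔ (¬ lt y a ∧ ¬ lt b y)) :
    x = y := by
  apply negantisym
  · intro hxy
    obtain ⟨s, hs, s', hs', hsx, hss', hys'⟩ := hdense x y hxy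
    obtain ⟨a, ha, b, hb, hxa, hbx⟩ := hbicof x
    have := (h a ha s hs).mp ⟨hxa, hsx⟩
    rcases cotrans s s' y hss' with hsy | hys'2
    · exact this.2 hsy
    · exact hys' hys'2
  · intro hyx
    obtain ⟨s, hs, s', hs', hsy, hss', hxs'⟩ := hdense y x hyx
    obtain ⟨a, ha, b, hb, hya, hby⟩ := hbicof y
    have := (h a ha s hs).mpr ⟨hya, hsy⟩
    rcases cotrans s s' x hss' with hsx | hxs'2
    · exact this.2 hsx
    · exact hxs' hxs'2
end

section
/- Let A be an Archimedean ordered abelian group and X an ordered set containing A as an almost dense, bicofinal subset. If x, y ∈ X are such that for each ε > 0 in A there exist u, v ∈ A with u ≤ x ≤ v, u ≤ y ≤ v, and v − u < ε, then x = y. -/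
/-- `n`-fold sum `n • a` in terms of a raw addition and zero. -/
def nsmulRaw {A : Type*} (add : A → A → A) (zero : A) : ℕ → A → A
  | 0, _ => zero
  | n + 1, a => add a (nsmulRaw add zero n a)

theorem stmt7 {A X : Type*} (ltA : A → A → Prop) (lt : X → X → Prop)
    (add : A → A → A) (neg : A → A) (zeroA : A)
    -- A is an abelian group
    (hassoc : ∀ a b c : A, add (add a b) c = add a (add b c))
    (hcomm : ∀ a b : A, add a b = add b a)
    (hzero : ∀ a : A, add a zeroA = a)
    (hneg : ∀ a : A, add a (neg a) = zeroA)
    -- A and X are ordered sets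
    (asymA : ∀ x y : A, ltA x y → ¬ ltA y x)
    (cotransA : ∀ x y z : A, ltA x y → ltA x z ∨ ltA z y)
    (negantisymA : ∀ x y : A, ¬ ltA x y → ¬ ltA y x → x = y)
    (asym : ∀ x y : X, lt x y → ¬ lt y x)
    (cotrans : ∀ x y z : X, lt x y → lt x z ∨ lt z y)
    (negantisym : ∀ x y : X, ¬ lt x y → ¬ lt y x → x = y)
    -- the order on A is compatible with addition
    (hcompat : ∀ x y z : A, ltA (add x z) (add y z) ↔ ltA x y)
    -- A is Archimedean
    (harch : ∀ x y : A, ltA zeroA x → ltA zeroA y →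
      ∃ n : ℕ, 0 < n ∧ ¬ ltA (nsmulRaw add zeroA n y) x)
    -- A embeds into X as an almost dense, bicofinal subset
    (i : A → X)
    (hembed : ∀ a b : A, ltA a b ↔ lt (i a) (i b))
    (hdense : ∀ x y : X, lt x y → ∃ s s' : A,
      ¬ lt (i s) x ∧ lt (i s) (i s') ∧ ¬ lt y (i s'))
    (hbicof : ∀ x : X, ∃ s s' : A, ¬ lt x (i s) ∧ ¬ lt (i s') x)
    (x y : X)
    (h : ∀ ε : A, ltA zeroA ε → ∃ u v : A,
      ¬ lt x (i u) ∧ ¬ lt (i v) x ∧ ¬ lt y (i u) ∧ ¬ lt (i v) y ∧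
      ltA (add v (neg u)) ε) :
    x = y := by
  have haddle : ∀ a a' b b' : A, ¬ ltA a' a → ¬ ltA b' b →
      ¬ ltA (add a' b') (add a b) := by
    intro a a' b b' h1 h2 hc
    rcases cotransA _ _ (add a b') hc with h' | h'
    · exact h1 ((hcompat a' a b').mp h')
    · rw [hcomm a b', hcomm a b] at h'
      exact h2 ((hcompat b' b a).mp h')
  have hnegle : ∀ u s : A, ¬ ltA s u → ¬ ltA (neg u) (neg s) := by
    intro u s h1 hc
    apply h1
    have h2 := (hcompat (neg u) (neg s) (add u s)).mpr hc
    have e1 : add (neg u) (add u s) = s := by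
      rw [← hassoc, hcomm (neg u) u, hneg, hcomm, hzero]
    have e2 : add (neg s) (add u s) = u := by
      rw [hcomm u s, ← hassoc, hcomm (neg s) s, hneg, hcomm, hzero]
    rwa [e1, e2] at h2
  have key : ∀ p q : X,
      (∀ ε : A, ltA zeroA ε → ∃ u v : A,
        ¬ lt p (i u) ∧ ¬ lt (i v) p ∧ ¬ lt q (i u) ∧ ¬ lt (i v) q ∧
        ltA (add v (neg u)) ε) → ¬ lt p q := by
    intro p q hpq hlt
    obtain ⟨s, s', hs, hss', hs'⟩ := hdense p q hlt
    have hε : ltA zeroA (add s' (neg s)) := by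
      have h2 := (hcompat s s' (neg s)).mpr ((hembed s s').mpr hss')
      rwa [hneg] at h2
    obtain ⟨u, v, hpu, hvp, hqu, hvq, hvu⟩ := hpq _ hε
    have hus : ¬ ltA s u := fun hc => by
      rcases cotrans _ _ p ((hembed s u).mp hc) with h' | h'
      · exact hs h'
      · exact hpu h'
    have hsv : ¬ ltA v s' := fun hc => by
      rcases cotrans _ _ q ((hembed v s').mp hc) with h' | h'
      · exact hvq h'
      · exact hs' h'
    exact haddle s' v (neg s) (neg u) hsv (hnegle u s hus) hvu
  refine negantisym x y (key x y h) (key y x ?_)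
  intro ε hε
  obtain ⟨u, v, h1, h2, h3, h4, h5⟩ := h ε hε
  exact ⟨u, v, h3, h4, h1, h2, h5⟩
end

section
/- For a nonzero (apart from zero) real number x, the set D_x = {1/b ∈ ℚ : (0 < x ∧ x ≤ b) ∨ (x ≤ b ∧ b < 0)} of rational numbers is nonempty, bounded above, and upper order located (i.e., supable). -/
theorem stmt10 (x : ℝ) (hx : x < 0 ∨ 0 < x) :
    let D : Set ℝ := {z : ℝ | ∃ b : ℚ, z = ((1 / b : ℚ) : ℝ) ∧
      ((0 < x ∧ x ≤ (b : ℝ)) ∨ (x ≤ (b : ℝ) ∧ (b : ℝ) < 0))}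
    D.Nonempty ∧ (∃ u : ℝ, ∀ s ∈ D, s ≤ u) ∧
      ∀ u v : ℝ, u < v →
        (∃ s ∈ D, u < s) ∨ (∃ w : ℝ, (∀ s ∈ D, s ≤ w) ∧ w < v) := by
  intro D
  have hne : D.Nonempty := by
    rcases hx with h | h
    · obtain ⟨b, hb1, hb2⟩ := exists_rat_btwn h
      exact ⟨((1 / b : ℚ) : ℝ), b, rfl, Or.inr ⟨le_of_lt hb1, hb2⟩⟩
    · obtain ⟨b, hb⟩ := exists_rat_gt x
      exact ⟨((1 / b : ℚ) : ℝ), b, rfl, Or.inl ⟨h, le_of_lt hb⟩⟩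
  have hbdd : ∃ u : ℝ, ∀ s ∈ D, s ≤ u := by
    rcases hx with h | h
    · refine ⟨0, ?_⟩
      rintro s ⟨b, rfl, hb⟩
      rcases hb with ⟨hx0, _⟩ | ⟨_, hb0⟩
      · linarith
      · have hb0' : (b : ℝ) < 0 := hb0
        have : (1 / (b : ℝ)) < 0 := one_div_neg.mpr hb0'
        push_cast
        linarith
    · refine ⟨1 / x, ?_⟩
      rintro s ⟨b, rfl, hb⟩
      rcases hb with ⟨_, hxb⟩ | ⟨hxb, hb0⟩
      · have : 1 / (b : ℝ) ≤ 1 / x := one_div_le_one_div_of_le h hxb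
        push_cast
        linarith
      · linarith
  refine ⟨hne, hbdd, ?_⟩
  intro u v huv
  by_cases hcase : ∃ s ∈ D, u < s
  · exact Or.inl hcase
  · push_neg at hcase
    exact Or.inr ⟨u, hcase, huv⟩
end

section
/- Under the hypotheses of the multiplication extension theorem, any two admissible multiplications on X agree: if ·̂ and ·̃ are both admissible multiplications on X, then x ·̂ y = x ·̃ y for all x, y ∈ X. -/
/-- A multiplication `mul` on an ordered set `X` (order `lt`, `le x y` meaning
`¬ lt y x`) with distinguished element `zero`, relative to a submonoid `M`
with multiplication `mulM`, is admissible. -/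
def AdmissibleMul {X : Type*} (lt : X → X → Prop) (zero : X) (M : Set X)
    (mulM : X → X → X) (mul : X → X → X) : Prop :=
  -- preadmissible
  (∀ x : X, mul zero x = zero ∧ mul x zero = zero) ∧
  (∀ x y z : X, lt x y → lt zero z → lt (mul x z) (mul y z)) ∧
  (∀ x y z : X, lt x y → lt z zero → lt (mul y z) (mul x z)) ∧
  -- extends the multiplication on M
  (∀ a ∈ M, ∀ b ∈ M, mul a b = mulM a b) ∧
  -- locatedness condition (3)
  (∀ x y : X, ∀ c ∈ M, ∀ d ∈ M,
    (¬ lt (mul x y) c ∧ ¬ lt d (mul x y)) →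
    ∃ a ∈ M, ∃ b ∈ M, ∃ a' ∈ M, ∃ b' ∈ M,
      (¬ lt x a ∧ ¬ lt b x) ∧ (¬ lt y a' ∧ ¬ lt b' y) ∧
      ∃ l u : X,
        l ∈ ({mulM a a', mulM a b', mulM b a', mulM b b'} : Set X) ∧
        (∀ p ∈ ({mulM a a', mulM a b', mulM b a', mulM b b'} : Set X), ¬ lt p l) ∧
        u ∈ ({mulM a a', mulM a b', mulM b a', mulM b b'} : Set X) ∧
        (∀ p ∈ ({mulM a a', mulM a b', mulM b a', mulM b b'} : Set X), ¬ lt u p) ∧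
        ¬ lt l c ∧ ¬ lt (mul x y) l ∧ ¬ lt u (mul x y) ∧ ¬ lt d u)

theorem stmt15 {X : Type*} (lt : X → X → Prop) (zero one : X) (M : Set X)
    (mulM : X → X → X)
    -- X is an ordered set
    (asym : ∀ x y : X, lt x y → ¬ lt y x)
    (cotrans : ∀ x y z : X, lt x y → lt x z ∨ lt z y)
    (negantisym : ∀ x y : X, ¬ lt x y → ¬ lt y x → x = y)
    -- M is a commutative ordered monoid with distinguished element 0 (and 0 ≤ 1)
    (hone : one ∈ M) (hzeroM : zero ∈ M)
    (hclosed : ∀ a ∈ M, ∀ b ∈ M, mulM a b ∈ M)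
    (hassoc : ∀ a ∈ M, ∀ b ∈ M, ∀ c ∈ M, mulM (mulM a b) c = mulM a (mulM b c))
    (hcomm : ∀ a ∈ M, ∀ b ∈ M, mulM a b = mulM b a)
    (hid : ∀ a ∈ M, mulM a one = a)
    (hposM : ∀ a ∈ M, ∀ b ∈ M, lt zero a → lt zero b → lt zero (mulM a b))
    (hzeroone : ¬ lt one zero)
    -- M is locally bounded
    (hlocbdd : ∀ S : Set X, S ⊆ M → S.Nonempty →
      (∃ n : ℕ, ∃ f : Fin n → X, S = Set.range f) →
      (∃ m ∈ S, ∀ s ∈ S, ¬ lt s m) ∧ (∃ m ∈ S, ∀ s ∈ S, ¬ lt m s))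
    -- M is almost dense and bicofinal in X
    (hdense : ∀ x y : X, lt x y → ∃ s ∈ M, ∃ s' ∈ M,
      ¬ lt s x ∧ lt s s' ∧ ¬ lt y s')
    (hbicof : ∀ x : X, ∃ s ∈ M, ∃ s' ∈ M, ¬ lt x s ∧ ¬ lt s' x)
    -- two admissible multiplications
    (mul1 mul2 : X → X → X)
    (h1 : AdmissibleMul lt zero M mulM mul1)
    (h2 : AdmissibleMul lt zero M mulM mul2)
    (x y : X) :
    mul1 x y = mul2 x y := by
  classical
  obtain ⟨hz1, hpos1, hneg1, hext1, hloc1⟩ := h1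
  -- basic order lemmas
  have lirr : ∀ a : X, ¬ lt a a := fun a h => asym a a h h
  have letrans : ∀ a b c : X, ¬ lt b a → ¬ lt c b → ¬ lt c a := by
    intro a b c hab hbc hca
    rcases cotrans c a b hca with h | h
    · exact hbc h
    · exact hab h
  have ltle : ∀ a b c : X, lt a b → ¬ lt c b → lt a c := by
    intro a b c h hbc
    rcases cotrans a b c h with h' | h'
    · exact h'
    · exact absurd h' hbc
  -- mulM facts derived from mul1
  have hMz : ∀ a ∈ M, mulM zero a = zero ∧ mulM a zero = zero := by
    intro a ha
    constructor
    · rw [← hext1 zero hzeroM a ha]; exact (hz1 a).1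
    · rw [← hext1 a ha zero hzeroM]; exact (hz1 a).2
  have hMpos : ∀ a ∈ M, ∀ b ∈ M, ∀ w ∈ M, lt a b → lt zero w →
      lt (mulM a w) (mulM b w) := by
    intro a ha b hb w hw hab hw0
    have := hpos1 a b w hab hw0
    rwa [hext1 a ha w hw, hext1 b hb w hw] at this
  have hMneg : ∀ a ∈ M, ∀ b ∈ M, ∀ w ∈ M, lt a b → lt w zero →
      lt (mulM b w) (mulM a w) := by
    intro a ha b hb w hw hab hw0
    have := hneg1 a b w hab hw0
    rwa [hext1 a ha w hw, hext1 b hb w hw] at this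
  -- weak monotonicity of mulM in the first argument
  have wmono : ∀ a ∈ M, ∀ b ∈ M, ∀ w ∈ M, ¬ lt b a → ¬ lt w zero →
      ¬ lt (mulM b w) (mulM a w) := by
    intro a ha b hb w hw hab hwpos h
    by_cases hw0 : lt zero w
    · by_cases hab' : lt a b
      · exact asym _ _ (hMpos a ha b hb w hw hab' hw0) h
      · have he : a = b := negantisym a b hab' hab
        rw [he] at h; exact lirr _ h
    · have he : zero = w := negantisym zero w hw0 hwpos
      rw [← he, (hMz a ha).2, (hMz b hb).2] at h
      exact lirr _ h
  have wanti : ∀ a ∈ M, ∀ b ∈ M, ∀ w ∈ M, ¬ lt b a → ¬ lt zero w →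
      ¬ lt (mulM a w) (mulM b w) := by
    intro a ha b hb w hw hab hwneg h
    by_cases hw0 : lt w zero
    · by_cases hab' : lt a b
      · exact asym _ _ (hMneg a ha b hb w hw hab' hw0) h
      · have he : a = b := negantisym a b hab' hab
        rw [he] at h; exact lirr _ h
    · have he : zero = w := negantisym zero w hwneg hw0
      rw [← he, (hMz a ha).2, (hMz b hb).2] at h
      exact lirr _ h
  -- interval lemma, upper bound: if a ≤ A ≤ b and a' ≤ A' ≤ b' then
  -- A·A' is below some product of the endpoints
  have upper : ∀ a ∈ M, ∀ b ∈ M, ∀ a' ∈ M, ∀ b' ∈ M, ∀ A ∈ M, ∀ A' ∈ M,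
      ¬ lt A a → ¬ lt b A → ¬ lt A' a' → ¬ lt b' A' →
      ∃ q ∈ ({mulM a a', mulM a b', mulM b a', mulM b b'} : Set X),
        ¬ lt q (mulM A A') := by
    intro a ha b hb a' ha' b' hb' A hA A' hA' haA hAb haA' hA'b
    by_cases hs : lt A' zero
    · -- A' ≤ 0
      have hA'le : ¬ lt zero A' := asym _ _ hs
      have step1 : ¬ lt (mulM a A') (mulM A A') := wanti a ha A hA A' hA' haA hA'le
      rw [hcomm a ha A' hA'] at step1
      by_cases hsa : lt a zero
      · -- a ≤ 0 : use a·a'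
        have step2 : ¬ lt (mulM a' a) (mulM A' a) :=
          wanti a' ha' A' hA' a ha haA' (asym _ _ hsa)
        have : ¬ lt (mulM a' a) (mulM A A') := letrans _ _ _ step1 step2
        rw [hcomm a' ha' a ha] at this
        exact ⟨mulM a a', by simp, this⟩
      · -- 0 ≤ a : use a·b'
        have step2 : ¬ lt (mulM b' a) (mulM A' a) :=
          wmono A' hA' b' hb' a ha hA'b hsa
        have : ¬ lt (mulM b' a) (mulM A A') := letrans _ _ _ step1 step2
        rw [hcomm b' hb' a ha] at this
        exact ⟨mulM a b', by simp, this⟩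
    · -- 0 ≤ A'
      have step1 : ¬ lt (mulM b A') (mulM A A') := wmono A hA b hb A' hA' hAb hs
      rw [hcomm b hb A' hA'] at step1
      by_cases hsb : lt b zero
      · -- b ≤ 0 : use b·a'
        have step2 : ¬ lt (mulM a' b) (mulM A' b) :=
          wanti a' ha' A' hA' b hb haA' (asym _ _ hsb)
        have : ¬ lt (mulM a' b) (mulM A A') := letrans _ _ _ step1 step2
        rw [hcomm a' ha' b hb] at this
        exact ⟨mulM b a', by simp, this⟩
      · -- 0 ≤ b : use b·b'
        have step2 : ¬ lt (mulM b' b) (mulM A' b) :=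
          wmono A' hA' b' hb' b hb hA'b hsb
        have : ¬ lt (mulM b' b) (mulM A A') := letrans _ _ _ step1 step2
        rw [hcomm b' hb' b hb] at this
        exact ⟨mulM b b', by simp, this⟩
  -- interval lemma, lower bound
  have lower : ∀ a ∈ M, ∀ b ∈ M, ∀ a' ∈ M, ∀ b' ∈ M, ∀ A ∈ M, ∀ A' ∈ M,
      ¬ lt A a → ¬ lt b A → ¬ lt A' a' → ¬ lt b' A' →
      ∃ q ∈ ({mulM a a', mulM a b', mulM b a', mulM b b'} : Set X),
        ¬ lt (mulM A A') q := by
    intro a ha b hb a' ha' b' hb' A hA A' hA' haA hAb haA' hA'b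
    by_cases hs : lt A' zero
    · -- A' ≤ 0 : b·A' ≤ A·A'
      have hA'le : ¬ lt zero A' := asym _ _ hs
      have step1 : ¬ lt (mulM A A') (mulM b A') := wanti A hA b hb A' hA' hAb hA'le
      rw [hcomm b hb A' hA'] at step1
      by_cases hsb : lt b zero
      · -- b ≤ 0 : b'·b ≤ A'·b, use b·b'
        have step2 : ¬ lt (mulM A' b) (mulM b' b) :=
          wanti A' hA' b' hb' b hb hA'b (asym _ _ hsb)
        have : ¬ lt (mulM A A') (mulM b' b) := letrans _ _ _ step2 step1
        rw [hcomm b' hb' b hb] at this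
        exact ⟨mulM b b', by simp, this⟩
      · -- 0 ≤ b : a'·b ≤ A'·b, use b·a'
        have step2 : ¬ lt (mulM A' b) (mulM a' b) :=
          wmono a' ha' A' hA' b hb haA' hsb
        have : ¬ lt (mulM A A') (mulM a' b) := letrans _ _ _ step2 step1
        rw [hcomm a' ha' b hb] at this
        exact ⟨mulM b a', by simp, this⟩
    · -- 0 ≤ A' : a·A' ≤ A·A'
      have step1 : ¬ lt (mulM A A') (mulM a A') := wmono a ha A hA A' hA' haA hs
      rw [hcomm a ha A' hA'] at step1
      by_cases hsa : lt a zero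
      · -- a ≤ 0 : b'·a ≤ A'·a, use a·b'
        have step2 : ¬ lt (mulM A' a) (mulM b' a) :=
          wanti A' hA' b' hb' a ha hA'b (asym _ _ hsa)
        have : ¬ lt (mulM A A') (mulM b' a) := letrans _ _ _ step2 step1
        rw [hcomm b' hb' a ha] at this
        exact ⟨mulM a b', by simp, this⟩
      · -- 0 ≤ a : a'·a ≤ A'·a, use a·a'
        have step2 : ¬ lt (mulM A' a) (mulM a' a) :=
          wmono a' ha' A' hA' a ha haA' hsa
        have : ¬ lt (mulM A A') (mulM a' a) := letrans _ _ _ step2 step1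
        rw [hcomm a' ha' a ha] at this
        exact ⟨mulM a a', by simp, this⟩
  -- key lemma: no separation between two admissible products
  have key : ∀ m1 m2 : X → X → X, AdmissibleMul lt zero M mulM m1 →
      AdmissibleMul lt zero M mulM m2 → ¬ lt (m1 x y) (m2 x y) := by
    intro m1 m2 hm1 hm2 hlt
    obtain ⟨-, -, -, -, hloc1'⟩ := hm1
    obtain ⟨-, -, -, -, hloc2'⟩ := hm2
    obtain ⟨s, hs, s', hs', hs1, hss', hs2⟩ := hdense (m1 x y) (m2 x y) hlt
    obtain ⟨c0, hc0, -, -, hcle, -⟩ := hbicof (m1 x y)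
    obtain ⟨-, -, d0, hd0, -, hdle⟩ := hbicof (m2 x y)
    obtain ⟨a1, ha1, b1, hb1, a1', ha1', b1', hb1', ⟨hxa1, hxb1⟩, ⟨hya1, hyb1⟩,
      l1, u1, -, hl1lb, -, hu1ub, -, -, -, hu1d⟩ :=
      hloc1' x y c0 hc0 s hs ⟨hcle, hs1⟩
    obtain ⟨a2, ha2, b2, hb2, a2', ha2', b2', hb2', ⟨hxa2, hxb2⟩, ⟨hya2, hyb2⟩,
      l2, u2, -, hl2lb, -, -, hl2c, -, -, -⟩ :=
      hloc2' x y s' hs' d0 hd0 ⟨hs2, hdle⟩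
    -- choose A = max(a1,a2), A' = max(a1',a2')
    obtain ⟨A, hAM, hAa1, hAa2, hAx⟩ :
        ∃ A ∈ M, ¬ lt A a1 ∧ ¬ lt A a2 ∧ ¬ lt x A := by
      by_cases h : lt a1 a2
      · exact ⟨a2, ha2, asym _ _ h, lirr a2, hxa2⟩
      · exact ⟨a1, ha1, lirr a1, h, hxa1⟩
    obtain ⟨A', hA'M, hA'a1, hA'a2, hA'y⟩ :
        ∃ A' ∈ M, ¬ lt A' a1' ∧ ¬ lt A' a2' ∧ ¬ lt y A' := by
      by_cases h : lt a1' a2'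
      · exact ⟨a2', ha2', asym _ _ h, lirr a2', hya2⟩
      · exact ⟨a1', ha1', lirr a1', h, hya1⟩
    have hAb1 : ¬ lt b1 A := letrans A x b1 hAx hxb1
    have hAb2 : ¬ lt b2 A := letrans A x b2 hAx hxb2
    have hA'b1 : ¬ lt b1' A' := letrans A' y b1' hA'y hyb1
    have hA'b2 : ¬ lt b2' A' := letrans A' y b2' hA'y hyb2
    -- p = A·A' lies below u1 and above l2
    obtain ⟨q1, hq1mem, hq1⟩ :=
      upper a1 ha1 b1 hb1 a1' ha1' b1' hb1' A hAM A' hA'M hAa1 hAb1 hA'a1 hA'b1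
    obtain ⟨q2, hq2mem, hq2⟩ :=
      lower a2 ha2 b2 hb2 a2' ha2' b2' hb2' A hAM A' hA'M hAa2 hAb2 hA'a2 hA'b2
    have hpu1 : ¬ lt u1 (mulM A A') := letrans _ _ _ hq1 (hu1ub q1 hq1mem)
    have hl2p : ¬ lt (mulM A A') l2 := letrans _ _ _ (hl2lb q2 hq2mem) hq2
    -- chain: p ≤ u1 ≤ s < s' ≤ l2 ≤ p, contradiction
    have hps : ¬ lt s (mulM A A') := letrans _ _ _ hpu1 hu1d
    have hs'p : ¬ lt (mulM A A') s' := letrans _ _ _ hl2c hl2p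
    have : lt s (mulM A A') := ltle s s' (mulM A A') hss' hs'p
    exact hps this
  exact negantisym _ _ (key mul1 mul2 ⟨hz1, hpos1, hneg1, hext1, hloc1⟩ h2)
    (key mul2 mul1 h2 ⟨hz1, hpos1, hneg1, hext1, hloc1⟩)
end

section
/- Let A be an Archimedean ordered abelian group and X an ordered set containing A as an almost dense, bicofinal subset. Then any two admissible additions on X (additions extending the addition of A and compatible with the order of X) are equal. -/
/-- An addition on `X` is admissible relative to the subgroup `A` with addition
`addA` if it extends `addA` on `A` and is compatible with the order on `X`. -/
def AdmissibleAdd {X : Type*} (lt : X → X → Prop) (A : Set X)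
    (addA : X → X → X) (add : X → X → X) : Prop :=
  (∀ a ∈ A, ∀ b ∈ A, add a b = addA a b) ∧
  (∀ x y z : X, lt (add x z) (add y z) ↔ lt x y) ∧
  (∀ x y z : X, lt (add z x) (add z y) ↔ lt x y)

theorem key16 {X : Type*} (lt : X → X → Prop) (A : Set X)
    (addA : X → X → X) (negA : X → X) (zeroA : X)
    (cotrans : ∀ x y z : X, lt x y → lt x z ∨ lt z y)
    (hzeroA : zeroA ∈ A)
    (hclosed : ∀ a ∈ A, ∀ b ∈ A, addA a b ∈ A)
    (hnegmem : ∀ a ∈ A, negA a ∈ A)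
    (hassoc : ∀ a ∈ A, ∀ b ∈ A, ∀ c ∈ A, addA (addA a b) c = addA a (addA b c))
    (hcomm : ∀ a ∈ A, ∀ b ∈ A, addA a b = addA b a)
    (hzero : ∀ a ∈ A, addA a zeroA = a)
    (hneg : ∀ a ∈ A, addA a (negA a) = zeroA)
    (hcompat : ∀ a ∈ A, ∀ b ∈ A, ∀ c ∈ A, (lt (addA a c) (addA b c) ↔ lt a b))
    (harch : ∀ a ∈ A, ∀ b ∈ A, lt zeroA a → lt zeroA b →
      ∃ n : ℕ, 0 < n ∧ ¬ lt (nsmulRaw addA zeroA n b) a)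
    (hdense : ∀ x y : X, lt x y → ∃ s ∈ A, ∃ s' ∈ A,
      ¬ lt s x ∧ lt s s' ∧ ¬ lt y s')
    (hbicof : ∀ x : X, ∃ s ∈ A, ∃ s' ∈ A, ¬ lt x s ∧ ¬ lt s' x)
    (add1 add2 : X → X → X)
    (h1 : AdmissibleAdd lt A addA add1)
    (h2 : AdmissibleAdd lt A addA add2)
    (x y : X) :
    ¬ lt (add1 x y) (add2 x y) := by
  classical
  -- order helpers:  `le a b` is `¬ lt b a`
  have T1 : ∀ a b c : X, lt a b → ¬ lt c b → lt a c := fun a b c hab hcb =>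
    (cotrans a b c hab).resolve_right hcb
  have T2 : ∀ a b c : X, ¬ lt b a → lt b c → lt a c := fun a b c hba hbc =>
    (cotrans b c a hbc).resolve_left hba
  have T3 : ∀ a b c : X, ¬ lt b a → ¬ lt c b → ¬ lt c a := by
    intro a b c hba hcb hca
    rcases cotrans c a b hca with h | h
    · exact hcb h
    · exact hba h
  -- group helpers
  have G0 : ∀ a ∈ A, addA zeroA a = a := fun a ha => by
    rw [hcomm zeroA hzeroA a ha, hzero a ha]
  have G2 : ∀ a ∈ A, ∀ b ∈ A, addA (addA a (negA b)) b = a := fun a ha b hb => by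
    rw [hassoc a ha (negA b) (hnegmem b hb) b hb,
        hcomm (negA b) (hnegmem b hb) b hb, hneg b hb, hzero a ha]
  have G3 : ∀ b ∈ A, ∀ c ∈ A, addA (negA b) (addA b c) = c := fun b hb c hc => by
    rw [← hassoc (negA b) (hnegmem b hb) b hb c hc,
        hcomm (negA b) (hnegmem b hb) b hb, hneg b hb, G0 c hc]
  -- approximation from below within any positive ε ∈ A
  have approx : ∀ ε, ε ∈ A → lt zeroA ε → ∀ t : X,
      ∃ v, v ∈ A ∧ ¬ lt t v ∧ lt t (addA v ε) := by
    intro ε hεA hε t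
    obtain ⟨s₀, hs₀A, s₁, hs₁A, hts₀, hs₁t⟩ := hbicof t
    have hnsmem : ∀ n, nsmulRaw addA zeroA n ε ∈ A := by
      intro n; induction n with
      | zero => exact hzeroA
      | succ n ih => exact hclosed ε hεA _ ih
    have hex : ∃ n, lt t (addA s₀ (nsmulRaw addA zeroA n ε)) := by
      have hs01 : ¬ lt s₁ s₀ := T3 s₀ t s₁ hts₀ hs₁t
      have hdA : addA s₁ (negA s₀) ∈ A := hclosed s₁ hs₁A _ (hnegmem s₀ hs₀A)
      have hd0 : ¬ lt (addA s₁ (negA s₀)) zeroA := by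
        have hc := hcompat s₁ hs₁A s₀ hs₀A (negA s₀) (hnegmem s₀ hs₀A)
        rw [hneg s₀ hs₀A] at hc
        exact fun hlt => hs01 (hc.mp hlt)
      have haA : addA (addA s₁ (negA s₀)) ε ∈ A := hclosed _ hdA ε hεA
      have ha0 : lt zeroA (addA (addA s₁ (negA s₀)) ε) := by
        have hc := hcompat _ hdA zeroA hzeroA ε hεA
        rw [G0 ε hεA] at hc
        exact T1 zeroA ε _ hε (fun hlt => hd0 (hc.mp hlt))
      obtain ⟨n, hn0, hna⟩ := harch _ haA ε hεA ha0 hε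
      refine ⟨n, ?_⟩
      -- from  (s₁ - s₀) + ε ≤ n•ε  deduce  s₁ + ε ≤ s₀ + n•ε
      have hstep : ¬ lt (addA s₀ (nsmulRaw addA zeroA n ε)) (addA s₁ ε) := by
        have hc := hcompat _ (hnsmem n) _ haA s₀ hs₀A
        have e1 : addA (addA (addA s₁ (negA s₀)) ε) s₀ = addA s₁ ε := by
          rw [hassoc _ hdA ε hεA s₀ hs₀A, hcomm ε hεA s₀ hs₀A,
              ← hassoc _ hdA s₀ hs₀A ε hεA, G2 s₁ hs₁A s₀ hs₀A]
        have e2 : addA (nsmulRaw addA zeroA n ε) s₀ = addA s₀ (nsmulRaw addA zeroA n ε) :=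
          hcomm _ (hnsmem n) s₀ hs₀A
        rw [e1, e2] at hc
        exact fun hlt => hna (hc.mp hlt)
      have hlt1 : lt s₁ (addA s₁ ε) := by
        have hc := hcompat zeroA hzeroA ε hεA s₁ hs₁A
        rw [G0 s₁ hs₁A, hcomm ε hεA s₁ hs₁A] at hc
        exact hc.mpr hε
      exact T2 t s₁ _ hs₁t (T1 s₁ _ _ hlt1 hstep)
    set P : ℕ → Prop := fun n => lt t (addA s₀ (nsmulRaw addA zeroA n ε)) with hP
    have hN : P (Nat.find hex) := Nat.find_spec hex
    have hN0 : Nat.find hex ≠ 0 := by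
      intro h0
      rw [hP] at hN
      rw [h0] at hN
      simp only [nsmulRaw] at hN
      rw [hzero s₀ hs₀A] at hN
      exact hts₀ hN
    obtain ⟨m, hm⟩ : ∃ m, Nat.find hex = m + 1 :=
      ⟨Nat.find hex - 1, (Nat.succ_pred_eq_of_pos (Nat.pos_of_ne_zero hN0)).symm⟩
    have hmlt : ¬ P m := Nat.find_min hex (by omega)
    refine ⟨addA s₀ (nsmulRaw addA zeroA m ε), hclosed s₀ hs₀A _ (hnsmem m), hmlt, ?_⟩
    have hfs : addA s₀ (nsmulRaw addA zeroA (m + 1) ε)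
        = addA (addA s₀ (nsmulRaw addA zeroA m ε)) ε := by
      show addA s₀ (addA ε (nsmulRaw addA zeroA m ε)) = _
      rw [hcomm ε hεA _ (hnsmem m), ← hassoc s₀ hs₀A _ (hnsmem m) ε hεA]
    rw [← hfs]
    have := hN
    rw [hP, hm] at this
    exact this
  -- main argument
  intro h
  obtain ⟨s, hsA, s', hs'A, hle1, hss', hle2⟩ := hdense _ _ h
  set ε := addA s' (negA s) with hεdef
  have hεA : ε ∈ A := hclosed s' hs'A _ (hnegmem s hsA)
  have hεpos : lt zeroA ε := by
    have hc := hcompat s hsA s' hs'A (negA s) (hnegmem s hsA)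
    rw [hneg s hsA] at hc
    exact hc.mpr hss'
  have hsε : addA s ε = s' := by
    rw [hεdef, hcomm s' hs'A _ (hnegmem s hsA), ← hassoc s hsA _ (hnegmem s hsA) s' hs'A,
        hneg s hsA, G0 s' hs'A]
  obtain ⟨v, hvA, hv1, hv2⟩ := approx ε hεA hεpos y
  set w := addA v ε with hwdef
  have hwA : w ∈ A := hclosed v hvA ε hεA
  have hA2 : lt (add2 x y) (add2 x w) := (h2.2.2 y w x).mpr hv2
  have hB : ¬ lt s (add1 x v) := by
    have h1' : ¬ lt (add1 x y) (add1 x v) := fun hc => hv1 ((h1.2.2 y v x).mp hc)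
    exact T3 _ _ _ h1' hle1
  have hC : ¬ lt s' (add2 x w) := by
    intro hlt
    obtain ⟨t, htA, t', ht'A, hs't, htt', hwt'⟩ := hdense _ _ hlt
    have ht'ε : addA t' (negA ε) ∈ A := hclosed t' ht'A _ (hnegmem ε hεA)
    set u := addA (addA t' (negA ε)) (negA v) with hudef
    have huA : u ∈ A := hclosed _ ht'ε _ (hnegmem v hvA)
    have huw : addA u w = t' := by
      show addA (addA (addA t' (negA ε)) (negA v)) (addA v ε) = t'
      rw [hassoc _ ht'ε _ (hnegmem v hvA) _ (hclosed v hvA ε hεA),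
          G3 v hvA ε hεA, G2 t' ht'A ε hεA]
    have huv : addA u v = addA t' (negA ε) := G2 _ ht'ε v hvA
    have hux : ¬ lt x u := by
      intro hxu
      have hq := (h2.2.1 x u w).mpr hxu
      rw [h2.1 u huA w hwA, huw] at hq
      exact hwt' hq
    have hL2 : ¬ lt (add1 x v) (add1 u v) := fun hc => hux ((h1.2.1 x u v).mp hc)
    have hL2' : ¬ lt (add1 x v) (addA t' (negA ε)) := by
      rw [h1.1 u huA v hvA, huv] at hL2; exact hL2
    have h5 : ¬ lt s (addA t' (negA ε)) := T3 _ _ _ hL2' hB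
    have h6 : ¬ lt s' t' := by
      have hc := hcompat s hsA _ ht'ε ε hεA
      rw [G2 t' ht'A ε hεA, hsε] at hc
      exact fun hlt' => h5 (hc.mp hlt')
    exact h6 (T2 s' t t' hs't htt')
  exact hle2 (T1 _ _ _ hA2 hC)

theorem stmt16 {X : Type*} (lt : X → X → Prop) (A : Set X)
    (addA : X → X → X) (negA : X → X) (zeroA : X)
    -- X is an ordered set
    (asym : ∀ x y : X, lt x y → ¬ lt y x)
    (cotrans : ∀ x y z : X, lt x y → lt x z ∨ lt z y)
    (negantisym : ∀ x y : X, ¬ lt x y → ¬ lt y x → x = y)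
    -- A is an abelian group under addA
    (hzeroA : zeroA ∈ A)
    (hclosed : ∀ a ∈ A, ∀ b ∈ A, addA a b ∈ A)
    (hnegmem : ∀ a ∈ A, negA a ∈ A)
    (hassoc : ∀ a ∈ A, ∀ b ∈ A, ∀ c ∈ A, addA (addA a b) c = addA a (addA b c))
    (hcomm : ∀ a ∈ A, ∀ b ∈ A, addA a b = addA b a)
    (hzero : ∀ a ∈ A, addA a zeroA = a)
    (hneg : ∀ a ∈ A, addA a (negA a) = zeroA)
    -- the order on A is compatible with addA
    (hcompat : ∀ a ∈ A, ∀ b ∈ A, ∀ c ∈ A, (lt (addA a c) (addA b c) ↔ lt a b))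
    -- A is Archimedean
    (harch : ∀ a ∈ A, ∀ b ∈ A, lt zeroA a → lt zeroA b →
      ∃ n : ℕ, 0 < n ∧ ¬ lt (nsmulRaw addA zeroA n b) a)
    -- A is almost dense and bicofinal in X
    (hdense : ∀ x y : X, lt x y → ∃ s ∈ A, ∃ s' ∈ A,
      ¬ lt s x ∧ lt s s' ∧ ¬ lt y s')
    (hbicof : ∀ x : X, ∃ s ∈ A, ∃ s' ∈ A, ¬ lt x s ∧ ¬ lt s' x)
    -- two admissible additions
    (add1 add2 : X → X → X)
    (h1 : AdmissibleAdd lt A addA add1)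
    (h2 : AdmissibleAdd lt A addA add2)
    (x y : X) :
    add1 x y = add2 x y :=
  negantisym _ _
    (key16 lt A addA negA zeroA cotrans hzeroA hclosed hnegmem hassoc hcomm hzero hneg
      hcompat harch hdense hbicof add1 add2 h1 h2 x y)
    (key16 lt A addA negA zeroA cotrans hzeroA hclosed hnegmem hassoc hcomm hzero hneg
      hcompat harch hdense hbicof add2 add1 h2 h1 x y)
end
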